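/- arXiv:0710.3423 — 8 statements merged into one kernel-verified Lean document; each statement's English description precedes it below -/
import Mathlib

section
/- Let G be a countable discrete group that is residually finite and admits a (right) Følner sequence (Fₙ). Then for every n ≥ 1 there exist a finite subset Kₙ ⊆ G with Fₙ ⊆ Kₙ and a normal subgroup Lₙ of G of finite index such that every element g ∈ G can be written uniquely as g = k·l with k ∈ Kₙ and l ∈ Lₙ (that is, G is tiled by the right translates Kₙl, l ∈ Lₙ, which are pairwise disjoint and cover G). -/
open Pointwise Filter
open scoped symmDiff

/-- If a countable discrete group `G` is residually finite and `(Fₙ)` is a right Følner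
sequence for `G`, then for every `n` there are a finite set `Kₙ ⊇ Fₙ` and a finite-index
normal subgroup `Lₙ` such that every `g ∈ G` is uniquely a product `k·l` with `k ∈ Kₙ`,
`l ∈ Lₙ` (a tiling `G = KₙLₙ`). -/
theorem exists_tilings_of_residuallyFinite_of_folner {G : Type*} [Group G] [Countable G]
    [DecidableEq G]
    (hRF : ∀ g : G, g ≠ 1 → ∃ N : Subgroup G, N.Normal ∧ N.FiniteIndex ∧ g ∉ N)
    (F : ℕ → Finset G)
    (hone : ∀ n, (1 : G) ∈ F n)
    (hmono : Monotone F)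
    (hexh : ∀ g : G, ∃ n, g ∈ F n)
    (hFolner : ∀ s : G, Tendsto
      (fun n => ((symmDiff (F n) ((F n).image (· * s))).card : ℝ) / ((F n).card : ℝ))
      atTop (nhds 0)) :
    ∀ n, ∃ (K : Finset G) (L : Subgroup G), F n ⊆ K ∧ L.Normal ∧ L.FiniteIndex ∧
      ∀ g : G, ∃! p : K × L, (p.1 : G) * (p.2 : G) = g := by
  intro n
  classical
  have hN : ∀ g : G, ∃ N : Subgroup G, N.Normal ∧ N.FiniteIndex ∧ (g ≠ 1 → g ∉ N) := by
    intro g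
    by_cases h : g = 1
    · exact ⟨⊤, inferInstance, inferInstance, fun hg => absurd h hg⟩
    · obtain ⟨N, h1, h2, h3⟩ := hRF g h
      exact ⟨N, h1, h2, fun _ => h3⟩
  choose N hNnorm hNfin hNsep using hN
  set T : Finset G := ((F n ×ˢ F n).filter (fun p => p.1 ≠ p.2)).image
    (fun p => p.1⁻¹ * p.2) with hT
  set L : Subgroup G := ⨅ g ∈ T, N g with hL
  have hLle : ∀ g ∈ T, L ≤ N g := fun g hg => biInf_le _ hg
  have hLnorm : L.Normal := by
    constructor
    intro x hx g
    simp only [hL, Subgroup.mem_iInf] at hx ⊢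
    intro i hi
    exact (hNnorm i).conj_mem x (hx i hi) g
  have hLfin : L.FiniteIndex := Subgroup.finiteIndex_iInf' _ (fun i _ => hNfin i)
  haveI := hLfin
  haveI : Finite (G ⧸ L) := L.finite_quotient_of_finiteIndex
  haveI : Fintype (G ⧸ L) := Fintype.ofFinite _
  set Q : G → G ⧸ L := QuotientGroup.mk with hQ
  have hinj : ∀ a ∈ F n, ∀ b ∈ F n, Q a = Q b → a = b := by
    intro a ha b hb hab
    by_contra hne
    have hmem : a⁻¹ * b ∈ T := by
      apply Finset.mem_image.mpr
      exact ⟨(a, b), Finset.mem_filter.mpr ⟨Finset.mem_product.mpr ⟨ha, hb⟩, hne⟩, rfl⟩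
    have h1 : a⁻¹ * b ∈ L := (QuotientGroup.eq).mp hab
    have h2 : a⁻¹ * b ∉ N (a⁻¹ * b) := by
      apply hNsep
      intro h
      exact hne (inv_mul_eq_one.mp h)
    exact h2 (hLle _ hmem h1)
  have hrep : ∀ c : G ⧸ L, ∃ x : G, Q x = c ∧ (c ∈ (F n).image Q → x ∈ F n) := by
    intro c
    by_cases h : c ∈ (F n).image Q
    · obtain ⟨a, ha, hac⟩ := Finset.mem_image.mp h
      exact ⟨a, hac, fun _ => ha⟩
    · exact ⟨c.out, QuotientGroup.out_eq' c, fun hc => absurd hc h⟩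
  choose f hf1 hf2 using hrep
  set K : Finset G := Finset.univ.image f with hK
  have hfK : ∀ a ∈ F n, f (Q a) = a := by
    intro a ha
    exact hinj _ (hf2 _ (Finset.mem_image.mpr ⟨a, ha, rfl⟩)) _ ha (hf1 _)
  refine ⟨K, L, ?_, hLnorm, hLfin, ?_⟩
  · intro a ha
    exact Finset.mem_image.mpr ⟨Q a, Finset.mem_univ _, hfK a ha⟩
  · intro g
    have hk : f (Q g) ∈ K := Finset.mem_image.mpr ⟨Q g, Finset.mem_univ _, rfl⟩
    have hl : (f (Q g))⁻¹ * g ∈ L := by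
      rw [← QuotientGroup.eq]
      exact hf1 (Q g)
    refine ⟨(⟨f (Q g), hk⟩, ⟨(f (Q g))⁻¹ * g, hl⟩), ?_, ?_⟩
    · simp
    rintro ⟨⟨k, hkK⟩, ⟨l, hlL⟩⟩ heq
    simp only at heq
    obtain ⟨c', -, hc'⟩ := Finset.mem_image.mp hkK
    have hqk : Q k = c' := hc' ▸ hf1 c'
    have hcc : Q g = c' := by
      rw [← hqk, ← heq, hQ]
      exact QuotientGroup.mk_mul_of_mem k hlL
    have hkfc : k = f (Q g) := by rw [hcc, hc']
    have hlv : l = (f (Q g))⁻¹ * g := by rw [← hkfc, ← heq]; group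
    simp only [Prod.ext_iff, Subtype.ext_iff]
    exact ⟨hkfc, hlv⟩
end

section
/- With G, K, L, F, φ as in the context (in particular G = KL is a tiling and F ⊆ K is finite nonempty), for every y ∈ G one has Σ_{x ∈ yL} φ(x)² = 1, the sum having only finitely many nonzero terms. -/
open Pointwise

/-- With a tiling `G = KL` and `F ⊆ K` finite nonempty, and
`φ(x) = √(|K ∩ Fx|/|F|)`, one has `Σ_{x ∈ yL} φ(x)² = 1` for every `y ∈ G`. -/
theorem sum_phi_sq_over_coset {G : Type*} [Group G] [Countable G] [DecidableEq G]
    (K : Finset G) (L : Subgroup G) (hL : L.Normal) (hLfi : L.FiniteIndex)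
    (hTile : ∀ g : G, ∃! p : K × L, (p.1 : G) * (p.2 : G) = g)
    (F : Finset G) (hFK : F ⊆ K) (hFne : F.Nonempty)
    (φ : G → ℝ)
    (hφ : ∀ x : G, φ x = Real.sqrt (((K ∩ F.image (· * x)).card : ℝ) / (F.card : ℝ)))
    (y : G) :
    ∑ᶠ x ∈ y • (L : Set G), φ x ^ 2 = 1 := by
  classical
  -- In every left coset `cL` there is exactly one element of `K`.
  have key : ∀ c : G, ∃! k : G, k ∈ K ∧ c⁻¹ * k ∈ L := by
    intro c
    obtain ⟨⟨k, l⟩, hkl, huniq⟩ := hTile c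
    simp only at hkl
    refine ⟨(k : G), ⟨k.2, ?_⟩, ?_⟩
    · have h1 : c⁻¹ * (k : G) = (l : G)⁻¹ := by rw [← hkl]; group
      rw [h1]; exact L.inv_mem l.2
    · rintro k' ⟨hk', hmem⟩
      have hl' : (k')⁻¹ * c ∈ L := by
        have := L.inv_mem hmem
        simpa [mul_inv_rev] using this
      have heq := huniq (⟨⟨k', hk'⟩, ⟨(k')⁻¹ * c, hl'⟩⟩ : K × L) (by simp)
      exact congrArg (fun p : K × L => (p.1 : G)) heq
  set S : Finset G :=
    (F.biUnion fun f => K.image fun k => f⁻¹ * k).filter (fun x => x ∈ y • (L : Set G)) with hS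
  have hmemS : ∀ x : G, x ∈ S ↔
      ((∃ f ∈ F, f * x ∈ K) ∧ x ∈ y • (L : Set G)) := by
    intro x
    rw [hS, Finset.mem_filter, Finset.mem_biUnion]
    refine and_congr ⟨?_, ?_⟩ Iff.rfl
    · rintro ⟨f, hf, hx⟩
      rw [Finset.mem_image] at hx
      obtain ⟨k, hk, rfl⟩ := hx
      exact ⟨f, hf, by simpa using hk⟩
    · rintro ⟨f, hf, hfx⟩
      exact ⟨f, hf, Finset.mem_image.mpr ⟨f * x, hfx, by group⟩⟩
  -- Reduce the finsum to a finite sum over `S`.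
  have hred : ∑ᶠ x ∈ y • (L : Set G), φ x ^ 2 = ∑ x ∈ S, φ x ^ 2 := by
    apply finsum_mem_eq_sum_of_inter_support_eq
    ext x
    simp only [Set.mem_inter_iff, Function.mem_support, Finset.mem_coe]
    constructor
    · rintro ⟨hx, hne⟩
      refine ⟨(hmemS x).mpr ⟨?_, hx⟩, hne⟩
      have hNE : (K ∩ F.image (· * x)).Nonempty := by
        rw [Finset.nonempty_iff_ne_empty]
        intro h
        apply hne
        rw [hφ, h]
        simp
      obtain ⟨k, hk⟩ := hNE
      rw [Finset.mem_inter, Finset.mem_image] at hk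
      obtain ⟨hkK, f, hf, rfl⟩ := hk
      exact ⟨f, hf, hkK⟩
    · rintro ⟨hxS, hne⟩
      exact ⟨((hmemS x).mp hxS).2, hne⟩
  rw [hred]
  -- Rewrite each term.
  have hFpos : (0 : ℝ) < (F.card : ℝ) := by
    exact_mod_cast Finset.card_pos.mpr hFne
  have hterm : ∀ x : G, φ x ^ 2 = ((F.filter fun f => f * x ∈ K).card : ℝ) / (F.card : ℝ) := by
    intro x
    have himg : (F.filter fun f => f * x ∈ K).image (· * x) = K ∩ F.image (· * x) := by
      ext k
      simp only [Finset.mem_image, Finset.mem_filter, Finset.mem_inter]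
      constructor
      · rintro ⟨f, ⟨hf, hfK⟩, rfl⟩
        exact ⟨hfK, f, hf, rfl⟩
      · rintro ⟨hk, f, hf, rfl⟩
        exact ⟨f, ⟨hf, hk⟩, rfl⟩
    have hcards : (K ∩ F.image (· * x)).card = (F.filter fun f => f * x ∈ K).card := by
      rw [← himg, Finset.card_image_of_injective _ (mul_left_injective x)]
    rw [hφ, Real.sq_sqrt (div_nonneg (Nat.cast_nonneg _) (Nat.cast_nonneg _)), hcards]
  simp_rw [hterm]
  rw [← Finset.sum_div]
  -- Count pairs (x, f) with x ∈ S, f ∈ F, f * x ∈ K in two ways.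
  have hswapN : ∑ x ∈ S, (F.filter fun f => f * x ∈ K).card
      = ∑ f ∈ F, (S.filter fun x => f * x ∈ K).card := by
    simp_rw [Finset.card_filter]
    exact Finset.sum_comm
  -- For each f ∈ F the inner set is a singleton.
  have hone : ∀ f ∈ F, (S.filter fun x => f * x ∈ K).card = 1 := by
    intro f hf
    obtain ⟨k₀, ⟨hk₀K, hk₀L⟩, hk₀uniq⟩ := key (f * y)
    have hset : S.filter (fun x => f * x ∈ K) = {f⁻¹ * k₀} := by
      ext x
      simp only [Finset.mem_filter, Finset.mem_singleton]
      constructor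
      · rintro ⟨hxS, hfx⟩
        obtain ⟨_, hxL⟩ := (hmemS x).mp hxS
        obtain ⟨l, hl, rfl⟩ := Set.mem_smul_set.mp hxL
        have hmem : (f * y)⁻¹ * (f * (y • l)) ∈ L := by
          have h2 : (f * y)⁻¹ * (f * (y • l)) = l := by
            simp only [smul_eq_mul]; group
          rw [h2]; exact hl
        have hk := hk₀uniq _ ⟨hfx, hmem⟩
        rw [← hk]
        simp only [smul_eq_mul]; group
      · rintro rfl
        refine ⟨(hmemS _).mpr ⟨⟨f, hf, by simpa using hk₀K⟩, ?_⟩, by simpa using hk₀K⟩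
        refine Set.mem_smul_set.mpr ⟨y⁻¹ * (f⁻¹ * k₀), ?_, by simp [smul_eq_mul]⟩
        simpa [mul_assoc] using hk₀L
    rw [hset, Finset.card_singleton]
  have hsum : ∑ f ∈ F, (S.filter fun x => f * x ∈ K).card = F.card := by
    rw [Finset.sum_congr rfl hone]
    simp
  have : ∑ x ∈ S, ((F.filter fun f => f * x ∈ K).card : ℝ) = (F.card : ℝ) := by
    exact_mod_cast hswapN.trans hsum
  rw [this, div_self (ne_of_gt hFpos)]
end

section
/- With G, K, L, F, φ as in the context (in particular G = KL is a tiling and F ⊆ K is finite nonempty), for all s, y ∈ G one has Σ_{x ∈ yL} |φ(x)² − φ(sx)²| ≤ |F △ Fs| / |F|, where △ denotes symmetric difference and the sum has only finitely many nonzero terms. -/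
open Pointwise
open scoped symmDiff

/-- With a tiling `G = KL`, `F ⊆ K` finite nonempty, and `φ(x) = √(|K ∩ Fx|/|F|)`,
for all `s, y ∈ G` one has `Σ_{x ∈ yL} |φ(x)² − φ(sx)²| ≤ |F ∆ Fs|/|F|`. -/
theorem sum_phi_sq_diff_over_coset {G : Type*} [Group G] [Countable G] [DecidableEq G]
    (K : Finset G) (L : Subgroup G) (hL : L.Normal) (hLfi : L.FiniteIndex)
    (hTile : ∀ g : G, ∃! p : K × L, (p.1 : G) * (p.2 : G) = g)
    (F : Finset G) (hFK : F ⊆ K) (hFne : F.Nonempty)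
    (φ : G → ℝ)
    (hφ : ∀ x : G, φ x = Real.sqrt (((K ∩ F.image (· * x)).card : ℝ) / (F.card : ℝ)))
    (s y : G) :
    ∑ᶠ x ∈ y • (L : Set G), |φ x ^ 2 - φ (s * x) ^ 2| ≤
      ((symmDiff F (F.image (· * s))).card : ℝ) / (F.card : ℝ) := by
  classical
  set D := symmDiff F (F.image (· * s)) with hD
  have hF0 : (0:ℝ) < F.card := by exact_mod_cast hFne.card_pos
  have hinj : ∀ z : G, Function.Injective (· * z) := fun z a b h => mul_right_cancel h
  -- φ squared
  have hφ2 : ∀ x : G, φ x ^ 2 = ((K ∩ F.image (· * x)).card : ℝ) / F.card := by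
    intro x
    rw [hφ, Real.sq_sqrt (by positivity)]
  -- translate of symmetric difference
  have hBC : ∀ x : G,
      symmDiff (F.image (· * x)) (F.image (· * (s * x))) = D.image (· * x) := by
    intro x
    have h1 : F.image (· * (s * x)) = (F.image (· * s)).image (· * x) := by
      rw [Finset.image_image]; congr 1; ext f; simp [mul_assoc]
    rw [h1, hD, Finset.image_symmDiff _ _ (hinj x)]
  -- counting lemma
  have hcount : ∀ x : G,
      (K ∩ D.image (· * x)).card = (D.filter (fun a => a * x ∈ K)).card := by
    intro x
    have himg : K ∩ D.image (· * x) = (D.filter (fun a => a * x ∈ K)).image (· * x) := by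
      ext b
      simp only [Finset.mem_inter, Finset.mem_image, Finset.mem_filter]
      constructor
      · rintro ⟨hbK, a, haD, rfl⟩; exact ⟨a, ⟨haD, hbK⟩, rfl⟩
      · rintro ⟨a, ⟨haD, haK⟩, rfl⟩; exact ⟨haK, a, haD, rfl⟩
    rw [himg, Finset.card_image_of_injective _ (hinj x)]
  -- intersection vs symmetric difference subset
  have hsub : ∀ B C : Finset G, K ∩ B ⊆ (K ∩ C) ∪ (K ∩ symmDiff B C) := by
    intro B C b hb
    rw [Finset.mem_inter] at hb
    by_cases h : b ∈ C
    · exact Finset.mem_union_left _ (Finset.mem_inter.2 ⟨hb.1, h⟩)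
    · refine Finset.mem_union_right _ (Finset.mem_inter.2 ⟨hb.1, ?_⟩)
      rw [Finset.mem_symmDiff]
      exact Or.inl ⟨hb.2, h⟩
  have hcardle : ∀ B C : Finset G,
      (K ∩ B).card ≤ (K ∩ C).card + (K ∩ symmDiff B C).card := fun B C =>
    le_trans (Finset.card_le_card (hsub B C)) (Finset.card_union_le _ _)
  -- pointwise bound
  have hpt : ∀ x : G, |φ x ^ 2 - φ (s * x) ^ 2| ≤
      ((D.filter (fun a => a * x ∈ K)).card : ℝ) / F.card := by
    intro x
    rw [hφ2, hφ2, div_sub_div_same, abs_div, abs_of_pos hF0]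
    gcongr
    rw [abs_sub_le_iff]
    constructor
    · have h := hcardle (F.image (· * x)) (F.image (· * (s * x)))
      rw [hBC x, hcount x] at h
      have := (Nat.cast_le (α := ℝ)).2 h
      push_cast at this ⊢
      linarith
    · have h := hcardle (F.image (· * (s * x))) (F.image (· * x))
      rw [symmDiff_comm, hBC x, hcount x] at h
      have := (Nat.cast_le (α := ℝ)).2 h
      push_cast at this ⊢
      linarith
  -- the finite support set
  set T : Finset G := D.biUnion (fun a => K.image (fun k => a⁻¹ * k)) with hT
  set t : Finset G := T.filter (fun x => x ∈ y • (L : Set G)) with ht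
  have hsupp : ∀ x : G, |φ x ^ 2 - φ (s * x) ^ 2| ≠ 0 → x ∈ T := by
    intro x hx
    have h1 : (0:ℝ) < |φ x ^ 2 - φ (s * x) ^ 2| := lt_of_le_of_ne (abs_nonneg _) (Ne.symm hx)
    have h2 := lt_of_lt_of_le h1 (hpt x)
    have h3 : (D.filter (fun a => a * x ∈ K)).card ≠ 0 := by
      intro h0
      rw [h0] at h2; simp at h2
    obtain ⟨a, ha⟩ := Finset.card_ne_zero.1 h3
    rw [Finset.mem_filter] at ha
    rw [hT, Finset.mem_biUnion]
    exact ⟨a, ha.1, Finset.mem_image.2 ⟨a * x, ha.2, by group⟩⟩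
  -- convert the finsum to a finite sum
  have heq : ∑ᶠ x ∈ y • (L : Set G), |φ x ^ 2 - φ (s * x) ^ 2| =
      ∑ x ∈ t, |φ x ^ 2 - φ (s * x) ^ 2| := by
    apply finsum_mem_eq_sum_of_inter_support_eq
    ext x
    simp only [Set.mem_inter_iff, Function.mem_support, ht, Finset.coe_filter,
      Set.mem_setOf_eq]
    constructor
    · rintro ⟨hx1, hx2⟩; exact ⟨⟨hsupp x hx2, hx1⟩, hx2⟩
    · rintro ⟨⟨_, hx1⟩, hx2⟩; exact ⟨hx1, hx2⟩
  rw [heq]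
  -- each a ∈ D has at most one x in the coset with a*x ∈ K
  have huniq : ∀ a : G, (t.filter (fun x => a * x ∈ K)).card ≤ 1 := by
    intro a
    rw [Finset.card_le_one]
    intro x₁ h₁ x₂ h₂
    simp only [ht, Finset.mem_filter] at h₁ h₂
    obtain ⟨⟨_, hx₁L⟩, hK₁⟩ := h₁
    obtain ⟨⟨_, hx₂L⟩, hK₂⟩ := h₂
    obtain ⟨l₁, hl₁, rfl⟩ := hx₁L
    obtain ⟨l₂, hl₂, rfl⟩ := hx₂L
    simp only [smul_eq_mul] at hK₁ hK₂ ⊢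
    have hmem : (y * l₁)⁻¹ * (y * l₂) ∈ L := by
      have : (y * l₁)⁻¹ * (y * l₂) = l₁⁻¹ * l₂ := by group
      rw [this]; exact L.mul_mem (L.inv_mem hl₁) hl₂
    obtain ⟨p, hp, hpu⟩ := hTile (a * (y * l₂))
    have e1 : (⟨⟨a * (y * l₂), hK₂⟩, ⟨1, L.one_mem⟩⟩ : K × L) = p := hpu _ (by simp)
    have e2 : (⟨⟨a * (y * l₁), hK₁⟩, ⟨(y * l₁)⁻¹ * (y * l₂), hmem⟩⟩ : K × L) = p :=
      hpu _ (by simp; group)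
    have e3 := e2.trans e1.symm
    have e4 : ((y * l₁)⁻¹ * (y * l₂) : G) = 1 := by
      have := congrArg (fun q : K × L => (q.2 : G)) e3
      simpa using this
    have : y * l₁ = y * l₂ := by
      have := inv_mul_eq_one.1 e4
      exact this
    rw [this]
  -- main estimate
  calc ∑ x ∈ t, |φ x ^ 2 - φ (s * x) ^ 2|
      ≤ ∑ x ∈ t, ((D.filter (fun a => a * x ∈ K)).card : ℝ) / F.card :=
        Finset.sum_le_sum fun x _ => hpt x
    _ = ((∑ x ∈ t, ((D.filter (fun a => a * x ∈ K)).card : ℕ)) : ℝ) / F.card := by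
        rw [← Finset.sum_div]
    _ ≤ (D.card : ℝ) / F.card := by
        gcongr
        have : ∑ x ∈ t, (D.filter (fun a => a * x ∈ K)).card ≤ D.card := by
            calc ∑ x ∈ t, (D.filter (fun a => a * x ∈ K)).card
                = ∑ x ∈ t, ∑ a ∈ D, if a * x ∈ K then 1 else 0 := by
                  simp only [Finset.card_filter]
              _ = ∑ a ∈ D, ∑ x ∈ t, if a * x ∈ K then 1 else 0 := Finset.sum_comm
              _ = ∑ a ∈ D, (t.filter (fun x => a * x ∈ K)).card := by
                  simp only [Finset.card_filter]
              _ ≤ ∑ a ∈ D, 1 := Finset.sum_le_sum fun a _ => huniq a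
              _ = D.card := by simp
        exact_mod_cast this
end

section
/- With G, K, L, F, φ, and the vectors ξ_{yL} as in the context, the family {ξ_{yL} : y ∈ K} is an orthonormal family of |K| vectors in ℓ²(G;ℂ): each ξ_{yL} is a unit vector, and ⟨ξ_{yL}, ξ_{zL}⟩ = 0 whenever y, z ∈ K are distinct. -/
open Pointwise

/-- With a tiling `G = KL`, `F ⊆ K` finite nonempty, `φ(x) = √(|K ∩ Fx|/|F|)`, and
`ξ_{yL} = Σ_{x ∈ yL} φ(x) δ_x ∈ ℓ²(G;ℂ)`, the family `{ξ_{yL} : y ∈ K}` is orthonormal. -/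
theorem xi_orthonormal {G : Type*} [Group G] [Countable G] [DecidableEq G]
    (K : Finset G) (L : Subgroup G) (hL : L.Normal) (hLfi : L.FiniteIndex)
    (hTile : ∀ g : G, ∃! p : K × L, (p.1 : G) * (p.2 : G) = g)
    (F : Finset G) (hFK : F ⊆ K) (hFne : F.Nonempty)
    (φ : G → ℝ)
    (hφ : ∀ x : G, φ x = Real.sqrt (((K ∩ F.image (· * x)).card : ℝ) / (F.card : ℝ)))
    (ξ : G → lp (fun _ : G => ℂ) 2)
    (hξ : ∀ y : G, (ξ y : ∀ _ : G, ℂ) =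
      Set.indicator (y • (L : Set G)) (fun x => (φ x : ℂ))) :
    Orthonormal ℂ (fun y : K => ξ (y : G)) := by
  classical
  -- distinct elements of K give disjoint cosets
  have hdisj : ∀ y z : G, y ∈ K → z ∈ K → y ≠ z → ∀ x : G,
      ¬ (x ∈ y • (L : Set G) ∧ x ∈ z • (L : Set G)) := by
    rintro y z hy hz hyz x ⟨hxy, hxz⟩
    obtain ⟨my, hmy, hxy'⟩ := hxy
    obtain ⟨mz, hmz, hxz'⟩ := hxz
    have h1 : ((⟨y, hy⟩, ⟨my, hmy⟩) : K × L) = (⟨z, hz⟩, ⟨mz, hmz⟩) :=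
      (hTile x).unique hxy' hxz'
    exact hyz (congrArg (fun p => (p.1 : G)) h1)
  rw [orthonormal_iff_ite]
  intro i j
  rw [lp.inner_eq_tsum]
  simp only [RCLike.inner_apply']
  by_cases hij : i = j
  · subst hij
    simp only [if_pos rfl]
    set y := (i : G) with hy
    have hterm : ∀ x : G, (starRingEnd ℂ) ((ξ y : ∀ _ : G, ℂ) x) * (ξ y : ∀ _ : G, ℂ) x
        = Set.indicator (y • (L : Set G))
            (fun x => ((((K ∩ F.image (· * x)).card : ℝ) / (F.card : ℝ) : ℝ) : ℂ)) x := by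
      intro x
      rw [hξ]
      by_cases hx : x ∈ y • (L : Set G)
      · rw [Set.indicator_of_mem hx, Set.indicator_of_mem hx]
        rw [Complex.conj_ofReal, ← Complex.ofReal_mul, hφ x,
          Real.mul_self_sqrt (by positivity)]
      · simp [Set.indicator_of_notMem hx]
    set T : Finset G := (F.image (·⁻¹)) * K with hT
    have hsupp0 : ∀ x : G, x ∉ T → K ∩ F.image (· * x) = ∅ := by
      intro x hx
      rw [Finset.eq_empty_iff_forall_notMem]
      intro k hk
      rw [Finset.mem_inter, Finset.mem_image] at hk
      obtain ⟨hkK, f, hf, hfx⟩ := hk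
      refine hx ?_
      have : x = f⁻¹ * k := by rw [← hfx]; group
      rw [this]
      exact Finset.mul_mem_mul (Finset.mem_image_of_mem _ hf) hkK
    have hsupp : ∀ x : G, x ∉ T →
        (starRingEnd ℂ) ((ξ y : ∀ _ : G, ℂ) x) * (ξ y : ∀ _ : G, ℂ) x = 0 := by
      intro x hx
      rw [hterm]
      by_cases hmem : x ∈ y • (L : Set G)
      · rw [Set.indicator_of_mem hmem, hsupp0 x hx]; simp
      · rw [Set.indicator_of_notMem hmem]
    rw [tsum_eq_sum hsupp]
    simp only [hterm]
    -- now a finite sum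
    set S : Finset G := T.filter (fun x => x ∈ y • (L : Set G)) with hS
    have hsum : ∑ x ∈ T, Set.indicator (y • (L : Set G))
        (fun x => ((((K ∩ F.image (· * x)).card : ℝ) / (F.card : ℝ) : ℝ) : ℂ)) x
        = ∑ x ∈ S, ((((K ∩ F.image (· * x)).card : ℝ) / (F.card : ℝ) : ℂ)) := by
      rw [hS, Finset.sum_filter]
      refine Finset.sum_congr rfl fun x _ => ?_
      by_cases hx : x ∈ y • (L : Set G) <;> simp [Set.indicator_apply, hx]
    rw [hsum]
    -- card K ∩ Fx = number of f in F with f*x ∈ K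
    have hcard : ∀ x : G, (K ∩ F.image (· * x)).card
        = (F.filter (fun f => f * x ∈ K)).card := by
      intro x
      have himg : K ∩ F.image (· * x) = (F.filter (fun f => f * x ∈ K)).image (· * x) := by
        ext k
        simp only [Finset.mem_inter, Finset.mem_image, Finset.mem_filter]
        constructor
        · rintro ⟨hkK, f, hf, rfl⟩; exact ⟨f, ⟨hf, hkK⟩, rfl⟩
        · rintro ⟨f, ⟨hf, hfK⟩, rfl⟩; exact ⟨hfK, f, hf, rfl⟩
      rw [himg, Finset.card_image_of_injective _ (mul_left_injective x)]
    have hFcard : (F.card : ℂ) ≠ 0 := by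
      exact_mod_cast Nat.cast_ne_zero.mpr (Finset.card_ne_zero_of_mem hFne.choose_spec)
    -- swap and count
    have hcount : ∀ f ∈ F, (S.filter (fun x => f * x ∈ K)).card = 1 := by
      intro f hf
      obtain ⟨⟨⟨k, hkK⟩, ⟨l, hlL⟩⟩, hkl, huniq⟩ := hTile (f * y)
      simp only at hkl
      rw [Finset.card_eq_one]
      refine ⟨f⁻¹ * k, ?_⟩
      ext x
      simp only [Finset.mem_filter, Finset.mem_singleton, hS, hT]
      constructor
      · rintro ⟨⟨hxT, hxCoset⟩, hfxK⟩
        obtain ⟨m, hm, rfl⟩ := hxCoset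
        -- f * (y * m) ∈ K ; (⟨f*(y•m), _⟩, ⟨m⁻¹,_⟩) multiplies to f*y
        have hkey : ((⟨f * (y * m), hfxK⟩, ⟨m⁻¹, inv_mem hm⟩) : K × L)
            = (⟨k, hkK⟩, ⟨l, hlL⟩) := by
          refine huniq _ ?_
          show f * (y * m) * m⁻¹ = f * y
          group
        have : f * (y * m) = k := congrArg (fun p => (p.1 : G)) hkey
        simp only [smul_eq_mul] at this ⊢
        rw [← this]; group
      · rintro rfl
        have hfk : f * (f⁻¹ * k) ∈ K := by rw [← mul_assoc]; simpa using hkK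
        refine ⟨⟨Finset.mul_mem_mul (Finset.mem_image_of_mem _ hf) hkK, ?_⟩, hfk⟩
        refine ⟨l⁻¹, inv_mem hlL, ?_⟩
        show y * l⁻¹ = f⁻¹ * k
        have : k = f * y * l⁻¹ := by rw [← hkl]; group
        rw [this]; group
    have hN : ∑ x ∈ S, (K ∩ F.image (· * x)).card = F.card := by
      calc ∑ x ∈ S, (K ∩ F.image (· * x)).card
          = ∑ x ∈ S, (F.filter (fun f => f * x ∈ K)).card :=
            Finset.sum_congr rfl (fun x _ => hcard x)
        _ = ∑ x ∈ S, ∑ f ∈ F, if f * x ∈ K then 1 else 0 := by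
            refine Finset.sum_congr rfl fun x _ => ?_
            rw [Finset.card_filter]
        _ = ∑ f ∈ F, ∑ x ∈ S, if f * x ∈ K then 1 else 0 := Finset.sum_comm
        _ = ∑ f ∈ F, (S.filter (fun x => f * x ∈ K)).card := by
            refine Finset.sum_congr rfl fun f _ => (Finset.card_filter _ _).symm
        _ = ∑ f ∈ F, 1 := Finset.sum_congr rfl hcount
        _ = F.card := by simp
    simp only [Complex.ofReal_div, Complex.ofReal_natCast]
    rw [← Finset.sum_div,
      show (∑ x ∈ S, (((K ∩ F.image (· * x)).card : ℕ) : ℂ)) = (F.card : ℂ) by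
        exact_mod_cast hN]
    exact div_self hFcard
  · -- off-diagonal
    have hne : (i : G) ≠ (j : G) := fun h => hij (Subtype.ext h)
    rw [if_neg hij]
    have : ∀ x : G, (starRingEnd ℂ) ((ξ (i : G) : ∀ _ : G, ℂ) x)
        * (ξ (j : G) : ∀ _ : G, ℂ) x = 0 := by
      intro x
      rw [hξ, hξ]
      by_cases hx : x ∈ (i : G) • (L : Set G)
      · have hx' : x ∉ (j : G) • (L : Set G) := fun h =>
          hdisj _ _ i.2 j.2 hne x ⟨hx, h⟩
        simp [Set.indicator_of_notMem hx']
      · simp [Set.indicator_of_notMem hx]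
    simp only [this]
    exact tsum_zero
end

section
/- With G, K, L, F, φ, the vectors ξ_{yL}, and the left regular representation λ as in the context, for all s, y ∈ G one has ‖λ(s)ξ_{yL} − ξ_{(sy)L}‖ ≤ √(|F △ Fs| / |F|), where △ denotes symmetric difference. -/
open Pointwise
open scoped symmDiff

private lemma sqrt_sub_sq_le_abs {a b : ℝ} (ha : 0 ≤ a) (hb : 0 ≤ b) :
    (Real.sqrt a - Real.sqrt b) ^ 2 ≤ |a - b| := by
  rcases le_total b a with h | h
  · rw [abs_of_nonneg (by linarith)]
    have h1 : Real.sqrt b ≤ Real.sqrt a := Real.sqrt_le_sqrt h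
    nlinarith [Real.sq_sqrt ha, Real.sq_sqrt hb, Real.sqrt_nonneg b,
      mul_le_mul_of_nonneg_right h1 (Real.sqrt_nonneg b)]
  · rw [abs_of_nonpos (by linarith)]
    have h1 : Real.sqrt a ≤ Real.sqrt b := Real.sqrt_le_sqrt h
    nlinarith [Real.sq_sqrt ha, Real.sq_sqrt hb, Real.sqrt_nonneg a,
      mul_le_mul_of_nonneg_right h1 (Real.sqrt_nonneg a)]

private lemma abs_card_sub_card_le {α : Type*} [DecidableEq α] (A B : Finset α) :
    |(A.card : ℝ) - (B.card : ℝ)| ≤ ((symmDiff A B).card : ℝ) := by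
  have h1 : A.card ≤ (A \ B).card + B.card := Finset.card_le_card_sdiff_add_card
  have h2 : B.card ≤ (B \ A).card + A.card := Finset.card_le_card_sdiff_add_card
  have h3 : (A \ B).card ≤ (symmDiff A B).card :=
    Finset.card_le_card (by rw [symmDiff_def]; exact Finset.subset_union_left)
  have h4 : (B \ A).card ≤ (symmDiff A B).card :=
    Finset.card_le_card (by rw [symmDiff_def]; exact Finset.subset_union_right)
  have hA : (A.card : ℝ) ≤ ((symmDiff A B).card : ℝ) + B.card := by
    exact_mod_cast h1.trans (add_le_add_left h3 _)
  have hB : (B.card : ℝ) ≤ ((symmDiff A B).card : ℝ) + A.card := by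
    exact_mod_cast h2.trans (add_le_add_left h4 _)
  rw [abs_sub_le_iff]
  constructor <;> linarith

/-- With a tiling `G = KL`, `F ⊆ K` finite nonempty, `φ(x) = √(|K ∩ Fx|/|F|)`,
`ξ_{yL} = Σ_{x ∈ yL} φ(x) δ_x ∈ ℓ²(G;ℂ)`, and `λ` the left regular representation,
one has `‖λ(s)ξ_{yL} − ξ_{(sy)L}‖ ≤ √(|F ∆ Fs|/|F|)` for all `s, y ∈ G`. -/
theorem lreg_xi_close_to_xi {G : Type*} [Group G] [Countable G] [DecidableEq G]
    (K : Finset G) (L : Subgroup G) (hL : L.Normal) (hLfi : L.FiniteIndex)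
    (hTile : ∀ g : G, ∃! p : K × L, (p.1 : G) * (p.2 : G) = g)
    (F : Finset G) (hFK : F ⊆ K) (hFne : F.Nonempty)
    (φ : G → ℝ)
    (hφ : ∀ x : G, φ x = Real.sqrt (((K ∩ F.image (· * x)).card : ℝ) / (F.card : ℝ)))
    (ξ : G → lp (fun _ : G => ℂ) 2)
    (hξ : ∀ y : G, (ξ y : ∀ _ : G, ℂ) =
      Set.indicator (y • (L : Set G)) (fun x => (φ x : ℂ)))
    (lam : G → (lp (fun _ : G => ℂ) 2 →L[ℂ] lp (fun _ : G => ℂ) 2))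
    (hlam : ∀ (s : G) (v : lp (fun _ : G => ℂ) 2) (x : G),
      (lam s v : ∀ _ : G, ℂ) x = (v : ∀ _ : G, ℂ) (s⁻¹ * x))
    (s y : G) :
    ‖lam s (ξ y) - ξ (s * y)‖ ≤
      Real.sqrt (((symmDiff F (F.image (· * s))).card : ℝ) / (F.card : ℝ)) := by
  classical
  set D : Finset G := symmDiff F (F.image (· * s)) with hD
  set C : Set G := (s * y) • (L : Set G) with hC
  set ψ : G → ℝ := Set.indicator C (fun x => φ (s⁻¹ * x) - φ x) with hψdef
  have hFpos : (0 : ℝ) < F.card := by exact_mod_cast Finset.card_pos.mpr hFne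
  -- coset membership translation
  have hcoset : ∀ x : G, s⁻¹ * x ∈ y • (L : Set G) ↔ x ∈ C := by
    intro x
    rw [Set.mem_smul_set_iff_inv_smul_mem, Set.mem_smul_set_iff_inv_smul_mem]
    simp [smul_eq_mul, mul_assoc]
  -- coordinates of the difference vector
  have hcoord : ∀ x : G, ‖((lam s (ξ y) - ξ (s * y) : lp (fun _ : G => ℂ) 2)
      : ∀ _ : G, ℂ) x‖ = |ψ x| := by
    intro x
    have hx : ((lam s (ξ y) - ξ (s * y) : lp (fun _ : G => ℂ) 2) : ∀ _ : G, ℂ) x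
        = ((ψ x : ℝ) : ℂ) := by
      rw [lp.coeFn_sub, Pi.sub_apply, hlam, hξ, hξ, hψdef]
      rw [Set.indicator_apply, Set.indicator_apply, Set.indicator_apply]
      rw [show (s⁻¹ * x ∈ y • (L : Set G)) = (x ∈ C) from propext (hcoset x)]
      split_ifs with h <;> simp
    rw [hx, Complex.norm_real, Real.norm_eq_abs]
  -- finite support
  set A : Finset G := F⁻¹ * K with hA
  set T : Finset G := A ∪ s • A with hT
  have hφ0 : ∀ x : G, x ∉ A → φ x = 0 := by
    intro x hx
    rw [hφ]
    have he : K ∩ F.image (· * x) = ∅ := by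
      rw [Finset.eq_empty_iff_forall_notMem]
      intro k hk
      rw [Finset.mem_inter, Finset.mem_image] at hk
      obtain ⟨hkK, f, hf, rfl⟩ := hk
      refine hx ?_
      have : f⁻¹ * (f * x) ∈ F⁻¹ * K := Finset.mul_mem_mul (Finset.inv_mem_inv hf) hkK
      simpa [hA] using this
    rw [he]
    simp
  have hψ0 : ∀ x : G, x ∉ T → ψ x = 0 := by
    intro x hx
    rw [hT, Finset.mem_union, not_or] at hx
    rw [hψdef, Set.indicator_apply]
    split_ifs with h
    · have h1 : φ x = 0 := hφ0 x hx.1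
      have h2 : φ (s⁻¹ * x) = 0 := by
        refine hφ0 _ (fun hc => hx.2 ?_)
        simpa using Finset.smul_mem_smul_finset (a := s) hc
      simp [h1, h2]
    · rfl
  -- uniqueness from the tiling: at most one element of a coset lands in K
  have uniq : ∀ (g x x' : G), x ∈ C → x' ∈ C → g * x ∈ K → g * x' ∈ K → x = x' := by
    intro g x x' hx hx' hk hk'
    rw [hC, Set.mem_smul_set] at hx hx'
    obtain ⟨l₁, hl₁, hx₁⟩ := hx
    obtain ⟨l₂, hl₂, hx₂⟩ := hx'
    obtain ⟨p, hp, hup⟩ := hTile (g * x')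
    have e1 : (⟨⟨g * x', hk'⟩, (1 : L)⟩ : K × L) = p := hup _ (by simp)
    have e2 : (⟨⟨g * x, hk⟩, ⟨l₁⁻¹ * l₂, mul_mem (inv_mem hl₁) hl₂⟩⟩ : K × L) = p := by
      refine hup _ ?_
      show (g * x) * (l₁⁻¹ * l₂) = g * x'
      rw [← hx₁, ← hx₂]
      simp [smul_eq_mul, mul_assoc]
    have h2 := congrArg (fun q : K × L => (q.2 : G)) (e1.trans e2.symm)
    have hl : (1 : G) = l₁⁻¹ * l₂ := h2
    have hll : l₁ = l₂ := by
      have := congrArg (l₁ * ·) hl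
      simpa [mul_assoc] using this
    rw [← hx₁, ← hx₂, hll]
  -- pointwise bound
  have hψineq : ∀ x : G, ψ x ^ 2 ≤
      Set.indicator C (fun x => ((K ∩ D.image (· * (s⁻¹ * x))).card : ℝ) / F.card) x := by
    intro x
    rw [hψdef, Set.indicator_apply, Set.indicator_apply]
    split_ifs with h
    · set w := s⁻¹ * x with hw
      have hFx : F.image (· * x) = (F.image (· * s)).image (· * w) := by
        rw [Finset.image_image]
        congr 1
        funext f
        simp [hw, mul_assoc]
      rw [hφ, hφ x, hFx]
      set a := ((K ∩ F.image (· * w)).card : ℝ) with ha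
      set b := ((K ∩ (F.image (· * s)).image (· * w)).card : ℝ) with hb
      have hdist : K ∩ D.image (· * w) =
          symmDiff (K ∩ F.image (· * w)) (K ∩ (F.image (· * s)).image (· * w)) := by
        rw [hD, Finset.image_symmDiff _ _ (mul_left_injective w), ← Finset.inf_eq_inter]
        exact inf_symmDiff_distrib_left _ _ _
      have hab : |a - b| ≤ ((K ∩ D.image (· * w)).card : ℝ) := by
        rw [hdist]; exact abs_card_sub_card_le _ _
      calc (Real.sqrt (a / F.card) - Real.sqrt (b / F.card)) ^ 2
          ≤ |a / F.card - b / F.card| :=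
            sqrt_sub_sq_le_abs
              (div_nonneg (by rw [ha]; exact Nat.cast_nonneg _) hFpos.le)
              (div_nonneg (by rw [hb]; exact Nat.cast_nonneg _) hFpos.le)
        _ = |a - b| / F.card := by
            rw [div_sub_div_same, abs_div, abs_of_pos hFpos]
        _ ≤ ((K ∩ D.image (· * w)).card : ℝ) / F.card := by gcongr
    · norm_num
  -- counting bound
  have hcount : ∑ x ∈ T.filter (· ∈ C), (K ∩ D.image (· * (s⁻¹ * x))).card ≤ D.card := by
    have hcardeq : ∀ x : G, (K ∩ D.image (· * (s⁻¹ * x))).card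
        = ∑ d ∈ D, if d * (s⁻¹ * x) ∈ K then 1 else 0 := by
      intro x
      rw [show K ∩ D.image (· * (s⁻¹ * x))
          = (D.filter (fun d => d * (s⁻¹ * x) ∈ K)).image (· * (s⁻¹ * x)) by
        ext k
        simp only [Finset.mem_inter, Finset.mem_image, Finset.mem_filter]
        constructor
        · rintro ⟨hk, d, hd, rfl⟩; exact ⟨d, ⟨hd, hk⟩, rfl⟩
        · rintro ⟨d, ⟨hd, hk⟩, rfl⟩; exact ⟨hk, d, hd, rfl⟩]
      rw [Finset.card_image_of_injective _ (mul_left_injective _), Finset.card_filter]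
    calc ∑ x ∈ T.filter (· ∈ C), (K ∩ D.image (· * (s⁻¹ * x))).card
        = ∑ x ∈ T.filter (· ∈ C), ∑ d ∈ D, if d * (s⁻¹ * x) ∈ K then 1 else 0 :=
          Finset.sum_congr rfl fun x _ => hcardeq x
      _ = ∑ d ∈ D, ∑ x ∈ T.filter (· ∈ C), if d * (s⁻¹ * x) ∈ K then 1 else 0 :=
          Finset.sum_comm
      _ ≤ ∑ _d ∈ D, 1 := by
          refine Finset.sum_le_sum fun d _ => ?_
          rw [← Finset.card_filter]
          refine Finset.card_le_one.mpr fun a ha b hb => ?_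
          simp only [Finset.mem_filter] at ha hb
          exact uniq (d * s⁻¹) a b ha.1.2 hb.1.2
            (by rw [mul_assoc]; exact ha.2) (by rw [mul_assoc]; exact hb.2)
      _ = D.card := by simp
  -- norm computation
  have hnorm2 : ‖lam s (ξ y) - ξ (s * y)‖ ^ 2 ≤ (D.card : ℝ) / F.card := by
    have h2 : (0 : ℝ) < (2 : ENNReal).toReal := by norm_num
    have hn := lp.norm_rpow_eq_tsum h2 (lam s (ξ y) - ξ (s * y))
    rw [tsum_eq_sum (s := T) (fun x hx => by
      rw [hcoord x, hψ0 x hx]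
      simp [Real.zero_rpow (by norm_num : (2 : ENNReal).toReal ≠ 0)])] at hn
    simp only [ENNReal.toReal_ofNat, Real.rpow_two] at hn
    rw [hn]
    have hsum : ∑ x ∈ T, ‖((lam s (ξ y) - ξ (s * y) : lp (fun _ : G => ℂ) 2)
        : ∀ _ : G, ℂ) x‖ ^ 2 = ∑ x ∈ T, ψ x ^ 2 := by
      refine Finset.sum_congr rfl fun x _ => ?_
      rw [hcoord x, sq_abs]
    rw [hsum]
    calc ∑ x ∈ T, ψ x ^ 2
        ≤ ∑ x ∈ T, Set.indicator C
            (fun x => ((K ∩ D.image (· * (s⁻¹ * x))).card : ℝ) / F.card) x :=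
          Finset.sum_le_sum fun x _ => hψineq x
      _ = ∑ x ∈ T.filter (· ∈ C), ((K ∩ D.image (· * (s⁻¹ * x))).card : ℝ) / F.card := by
          rw [Finset.sum_filter]
          exact Finset.sum_congr rfl fun x _ => (Set.indicator_apply _ _ _)
      _ = (∑ x ∈ T.filter (· ∈ C), ((K ∩ D.image (· * (s⁻¹ * x))).card : ℝ)) / F.card := by
          rw [Finset.sum_div]
      _ ≤ (D.card : ℝ) / F.card := by
          gcongr
          exact_mod_cast hcount
  exact (Real.le_sqrt (norm_nonneg _)
    (div_nonneg (Nat.cast_nonneg _) hFpos.le)).mpr hnorm2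
end

section
/- Let G be a countable discrete group with a (right) Følner sequence (Fₙ), and suppose that for each n there is a tiling G = KₙLₙ with Fₙ ⊆ Kₙ, where Kₙ is finite and Lₙ is a normal subgroup of finite index. Let φₙ(x) = √(|Kₙ ∩ Fₙx| / |Fₙ|), let ξⁿ_{yLₙ} = Σ_{x ∈ yLₙ} φₙ(x) δ_x ∈ ℓ²(G;ℂ), and let Pₙ be the orthogonal projection of ℓ²(G;ℂ) onto span{ξⁿ_{yLₙ} : y ∈ Kₙ}. Then Pₙ converges to the identity operator in the strong operator topology: Pₙξ → ξ for every ξ ∈ ℓ²(G;ℂ). -/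
open Pointwise Filter
open scoped symmDiff InnerProductSpace

set_option maxHeartbeats 2000000 in
/-- Given a right Følner sequence `(Fₙ)` for `G` and tilings `G = KₙLₙ` with `Fₙ ⊆ Kₙ`,
the projections `Pₙ` onto `span{ξⁿ_{yLₙ} : y ∈ Kₙ}` (where
`ξⁿ_{yLₙ} = Σ_{x ∈ yLₙ} φₙ(x) δ_x` and `φₙ(x) = √(|Kₙ ∩ Fₙx|/|Fₙ|)`) converge to the
identity in the strong operator topology. -/
theorem P_tendsto_id_strongly {G : Type*} [Group G] [Countable G] [DecidableEq G]
    (F K : ℕ → Finset G) (L : ℕ → Subgroup G)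
    (hone : ∀ n, (1 : G) ∈ F n)
    (hmono : Monotone F)
    (hexh : ∀ g : G, ∃ n, g ∈ F n)
    (hFolner : ∀ s : G, Tendsto
      (fun n => ((symmDiff (F n) ((F n).image (· * s))).card : ℝ) / ((F n).card : ℝ))
      atTop (nhds 0))
    (hFK : ∀ n, F n ⊆ K n)
    (hLnorm : ∀ n, (L n).Normal) (hLfi : ∀ n, (L n).FiniteIndex)
    (hTile : ∀ n, ∀ g : G, ∃! p : (K n) × (L n), (p.1 : G) * (p.2 : G) = g)
    (φ : ℕ → G → ℝ)
    (hφ : ∀ n (x : G),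
      φ n x = Real.sqrt (((K n ∩ (F n).image (· * x)).card : ℝ) / ((F n).card : ℝ)))
    (ξ : ℕ → G → lp (fun _ : G => ℂ) 2)
    (hξ : ∀ n (y : G), (ξ n y : ∀ _ : G, ℂ) =
      Set.indicator (y • ((L n) : Set G)) (fun x => (φ n x : ℂ)))
    (P : ℕ → (lp (fun _ : G => ℂ) 2 →L[ℂ] lp (fun _ : G => ℂ) 2))
    (hP : ∀ n v, P n v = ∑ y ∈ K n, ⟪ξ n y, v⟫_ℂ • ξ n y) :
    ∀ v : lp (fun _ : G => ℂ) 2, Tendsto (fun n => P n v) atTop (nhds v) := by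
  classical
  -- basic facts
  have hFcard : ∀ n, 0 < ((F n).card : ℝ) := fun n => by
    exact_mod_cast Finset.card_pos.2 ⟨1, hone n⟩
  have hφ0 : ∀ n x, 0 ≤ φ n x := fun n x => by rw [hφ]; exact Real.sqrt_nonneg _
  have hφsq : ∀ n x, φ n x ^ 2
      = ((K n ∩ (F n).image (· * x)).card : ℝ) / ((F n).card : ℝ) := by
    intro n x
    rw [hφ n x, Real.sq_sqrt]
    positivity
  -- tiling uniqueness helper
  have hKL : ∀ n {k l k' l' : G}, k ∈ K n → l ∈ L n → k' ∈ K n → l' ∈ L n →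
      k * l = k' * l' → k = k' := by
    intro n k l k' l' hk hl hk' hl' h
    have h1 := (hTile n (k' * l')).unique (y₁ := (⟨k, hk⟩, ⟨l, hl⟩))
      (y₂ := (⟨k', hk'⟩, ⟨l', hl'⟩)) h rfl
    exact congrArg (fun p => (p.1 : G)) h1
  -- choice of tiling decomposition
  have hex : ∀ n (g : G), ∃ k l : G, (k ∈ K n ∧ l ∈ L n) ∧ k * l = g := by
    intro n g
    obtain ⟨⟨k, l⟩, h, -⟩ := hTile n g
    exact ⟨k, l, ⟨k.2, l.2⟩, h⟩
  choose kOf lOf hmemKL hkl using hex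
  have hkK : ∀ n g, kOf n g ∈ K n := fun n g => (hmemKL n g).1
  have hlL : ∀ n g, lOf n g ∈ L n := fun n g => (hmemKL n g).2
  -- coset membership
  have hmem : ∀ n (y x : G), x ∈ y • ((L n) : Set G) ↔ y⁻¹ * x ∈ L n := by
    intro n y x
    rw [Set.mem_smul_set_iff_inv_smul_mem, smul_eq_mul, SetLike.mem_coe]
  have hmemcoset : ∀ n g, g ∈ (kOf n g) • ((L n) : Set G) := by
    intro n g
    rw [hmem]
    have : (kOf n g)⁻¹ * g = lOf n g := by
      rw [inv_mul_eq_iff_eq_mul, hkl n g]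
    rw [this]; exact hlL n g
  have huniq : ∀ n (g y : G), y ∈ K n → g ∈ y • ((L n) : Set G) → y = kOf n g := by
    intro n g y hy hgy
    rw [hmem] at hgy
    have h1 : y * (y⁻¹ * g) = kOf n g * lOf n g := by rw [hkl n g]; group
    exact hKL n hy hgy (hkK n g) (hlL n g) h1
  -- the value of ξ
  have hξa : ∀ n (y x : G), (ξ n y : ∀ _ : G, ℂ) x
      = if x ∈ y • ((L n) : Set G) then ((φ n x : ℝ) : ℂ) else 0 := by
    intro n y x
    rw [congrFun (hξ n y) x]
    exact Set.indicator_apply _ _ _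
  -- finite support of φ
  have hsupp : ∀ n (x : G), x ∉ ((F n)⁻¹ * K n : Finset G) → φ n x = 0 := by
    intro n x hx
    have he : K n ∩ (F n).image (· * x) = ∅ := by
      rw [Finset.eq_empty_iff_forall_notMem]
      intro k hk
      rw [Finset.mem_inter, Finset.mem_image] at hk
      obtain ⟨hkK', f, hf, rfl⟩ := hk
      exact hx (by simpa using Finset.mul_mem_mul (Finset.inv_mem_inv hf) hkK')
    rw [hφ, he]
    simp
  -- key counting lemma
  have hkey : ∀ n (y : G),
      ∑ x ∈ ((F n)⁻¹ * K n : Finset G).filter (fun x => x ∈ y • ((L n) : Set G)),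
        (K n ∩ (F n).image (· * x)).card = (F n).card := by
    intro n y
    rw [← Finset.card_sigma]
    refine Finset.card_bij' (fun p _ => p.2 * p.1⁻¹)
      (fun f _ => ⟨f⁻¹ * kOf n (f * y), kOf n (f * y)⟩) ?_ ?_ ?_ ?_
    · rintro ⟨x, k⟩ hp
      simp only [Finset.mem_sigma, Finset.mem_filter, Finset.mem_inter,
        Finset.mem_image] at hp
      obtain ⟨⟨-, -⟩, -, f, hf, hfx⟩ := hp
      show k * x⁻¹ ∈ F n
      rw [← hfx]
      simpa using hf
    · intro f hf
      have hk0 : kOf n (f * y) = f * y * (lOf n (f * y))⁻¹ := by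
        rw [eq_mul_inv_iff_mul_eq, hkl n (f * y)]
      rw [Finset.mem_sigma, Finset.mem_filter]
      refine ⟨⟨Finset.mul_mem_mul (Finset.inv_mem_inv hf) (hkK n (f * y)), ?_⟩, ?_⟩
      · rw [hmem]
        have : y⁻¹ * (f⁻¹ * kOf n (f * y)) = (lOf n (f * y))⁻¹ := by
          rw [hk0]; group
        rw [this]
        exact inv_mem (hlL n (f * y))
      · rw [Finset.mem_inter, Finset.mem_image]
        exact ⟨hkK n (f * y), f, hf, by group⟩
    · rintro ⟨x, k⟩ hp
      simp only [Finset.mem_sigma, Finset.mem_filter, Finset.mem_inter,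
        Finset.mem_image] at hp
      obtain ⟨⟨-, hxy⟩, hkK', f, hf, hfx⟩ := hp
      rw [hmem] at hxy
      -- k * x⁻¹ * y = k * (y⁻¹ * x)⁻¹ ... show kOf n (k * x⁻¹ * y) = k
      have heq : k * ((y⁻¹ * x)⁻¹) = k * x⁻¹ * y := by group
      have hkeq : k = kOf n (k * x⁻¹ * y) := by
        refine hKL n hkK' (inv_mem hxy) (hkK n (k * x⁻¹ * y))
          (hlL n (k * x⁻¹ * y)) ?_
        rw [heq, hkl n (k * x⁻¹ * y)]
      show (⟨(k * x⁻¹)⁻¹ * kOf n (k * x⁻¹ * y), kOf n (k * x⁻¹ * y)⟩ : Σ _ : G, G)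
        = ⟨x, k⟩
      have hx' : (k * x⁻¹)⁻¹ * kOf n (k * x⁻¹ * y) = x := by
        rw [← hkeq]; group
      rw [hx', ← hkeq]
    · intro f hf
      show kOf n (f * y) * (f⁻¹ * kOf n (f * y))⁻¹ = f
      group
  -- inner product of ξ with itself
  have hinner_self : ∀ n (y : G), ⟪ξ n y, ξ n y⟫_ℂ = 1 := by
    intro n y
    rw [lp.inner_eq_tsum]
    have h1 : ∀ x : G, ⟪(ξ n y : ∀ _ : G, ℂ) x, (ξ n y : ∀ _ : G, ℂ) x⟫_ℂ
        = if x ∈ y • ((L n) : Set G) then ((φ n x ^ 2 : ℝ) : ℂ) else 0 := by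
      intro x
      rw [hξa n y x]
      split_ifs with h
      · rw [RCLike.inner_apply, Complex.conj_ofReal]
        push_cast; ring
      · simp
    have h2 : ∀ x : G, x ∉ ((F n)⁻¹ * K n : Finset G) →
        (if x ∈ y • ((L n) : Set G) then ((φ n x ^ 2 : ℝ) : ℂ) else 0) = 0 := by
      intro x hx
      rw [hsupp n x hx]
      simp
    rw [tsum_congr h1, tsum_eq_sum h2, ← Finset.sum_filter]
    have h4 : ∑ x ∈ ((F n)⁻¹ * K n : Finset G).filter
        (fun x => x ∈ y • ((L n) : Set G)), φ n x ^ 2 = 1 := by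
      rw [Finset.sum_congr rfl (fun x _ => hφsq n x), ← Finset.sum_div,
        ← Nat.cast_sum, hkey n y, div_self (hFcard n).ne']
    rw [← Complex.ofReal_sum, h4, Complex.ofReal_one]
  -- norm of ξ
  have hnormξ : ∀ n (y : G), ‖ξ n y‖ = 1 := by
    intro n y
    have h1 := hinner_self n y
    rw [inner_self_eq_norm_sq_to_K] at h1
    have h2 : ‖ξ n y‖ ^ 2 = 1 := by
      apply Complex.ofReal_injective
      push_cast at h1 ⊢
      exact h1
    nlinarith [norm_nonneg (ξ n y)]
  -- orthogonality for distinct elements of K n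
  have hinner_ne : ∀ n {y y' : G}, y ∈ K n → y' ∈ K n → y ≠ y' →
      ⟪ξ n y, ξ n y'⟫_ℂ = 0 := by
    intro n y y' hy hy' hne
    rw [lp.inner_eq_tsum]
    convert tsum_zero with x
    rw [RCLike.inner_apply, hξa n y x, hξa n y' x]
    by_cases h1 : x ∈ y • ((L n) : Set G)
    · by_cases h2 : x ∈ y' • ((L n) : Set G)
      · exact absurd ((huniq n x y hy h1).trans (huniq n x y' hy' h2).symm) hne
      · rw [if_neg h2, zero_mul]
    · rw [if_neg h1, map_zero, mul_zero]
  -- the orthonormal family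
  have hON : ∀ n, Orthonormal ℂ (fun y : (K n : Finset G) => ξ n (y : G)) := by
    intro n
    rw [orthonormal_iff_ite]
    intro i j
    by_cases h : i = j
    · subst h; rw [if_pos rfl]; exact hinner_self n i
    · rw [if_neg h]
      exact hinner_ne n i.2 j.2 (fun hc => h (Subtype.ext hc))
  -- norm bound for P n
  have hPle : ∀ n (v : lp (fun _ : G => ℂ) 2), ‖P n v‖ ≤ ‖v‖ := by
    intro n v
    have h1 : P n v = ∑ y ∈ (K n).attach, ⟪ξ n (y : G), v⟫_ℂ • ξ n (y : G) := by
      rw [hP]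
      exact (Finset.sum_attach _ _).symm
    have h2 := (hON n).inner_sum (fun y => ⟪ξ n (y : G), v⟫_ℂ)
      (fun y => ⟪ξ n (y : G), v⟫_ℂ) (K n).attach
    rw [← h1, inner_self_eq_norm_sq_to_K] at h2
    have h3 : ∀ y : (K n : Finset G),
        (starRingEnd ℂ) ⟪ξ n (y : G), v⟫_ℂ * ⟪ξ n (y : G), v⟫_ℂ
          = ((‖⟪ξ n (y : G), v⟫_ℂ‖ ^ 2 : ℝ) : ℂ) := by
      intro y
      rw [RCLike.conj_mul]
      norm_cast
    rw [Finset.sum_congr rfl (fun y _ => h3 y)] at h2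
    have h4 : ‖P n v‖ ^ 2 = ∑ y ∈ (K n).attach, ‖⟪ξ n (y : G), v⟫_ℂ‖ ^ 2 := by
      apply Complex.ofReal_injective
      push_cast at h2 ⊢
      exact h2
    have h5 : ∑ y ∈ (K n).attach, ‖⟪ξ n (y : G), v⟫_ℂ‖ ^ 2 ≤ ‖v‖ ^ 2 :=
      (hON n).sum_inner_products_le v
    nlinarith [norm_nonneg (P n v), norm_nonneg v]
  -- inner of ξ with basis vectors
  have hinner_single : ∀ n (y g : G), ⟪ξ n y, lp.single 2 g (1 : ℂ)⟫_ℂ =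
      if g ∈ y • ((L n) : Set G) then ((φ n g : ℝ) : ℂ) else 0 := by
    intro n y g
    rw [lp.inner_single_right, RCLike.inner_apply, one_mul, hξa n y g]
    split_ifs with h
    · exact Complex.conj_ofReal _
    · exact map_zero _
  -- norm of basis vectors
  have hδnorm : ∀ g : G, ‖lp.single (E := fun _ : G => ℂ) 2 g (1 : ℂ)‖ = 1 := by
    intro g
    have := lp.norm_single (E := fun _ : G => ℂ) (p := 2) (by norm_num)
      g (1 : ℂ)
    simpa using this
  -- convergence on basis vectors
  have hδ1 : ∀ g : G, Tendsto (fun n => P n (lp.single 2 g (1 : ℂ))) atTop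
      (nhds (lp.single 2 g 1)) := by
    intro g
    have hPδ : ∀ n, P n (lp.single 2 g (1 : ℂ))
        = ((φ n g : ℝ) : ℂ) • ξ n (kOf n g) := by
      intro n
      rw [hP]
      rw [Finset.sum_eq_single (kOf n g)]
      · rw [hinner_single, if_pos (hmemcoset n g)]
      · intro y hy hne
        rw [hinner_single, if_neg, zero_smul]
        intro hmemy
        exact hne (huniq n g y hy hmemy)
      · intro h
        exact absurd (hkK n g) h
    have hnorm : ∀ n, ‖P n (lp.single 2 g (1 : ℂ)) - lp.single 2 g 1‖ ^ 2
        = 1 - φ n g ^ 2 := by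
      intro n
      rw [hPδ, norm_sub_sq (𝕜 := ℂ), inner_smul_left, hinner_single,
        if_pos (hmemcoset n g), norm_smul, hnormξ, hδnorm, Complex.conj_ofReal]
      have : ((φ n g : ℝ) : ℂ) * ((φ n g : ℝ) : ℂ) = ((φ n g ^ 2 : ℝ) : ℂ) := by
        push_cast; ring
      rw [this]
      have hre : RCLike.re ((φ n g ^ 2 : ℝ) : ℂ) = φ n g ^ 2 := by
        simp [RCLike.re_to_complex, ← Complex.ofReal_pow]
      have hn : ‖((φ n g : ℝ) : ℂ)‖ = φ n g := by
        rw [Complex.norm_real, Real.norm_eq_abs, abs_of_nonneg (hφ0 n g)]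
      rw [hre, hn]
      ring
    -- φ n g ^ 2 → 1
    have hub : ∀ n, φ n g ^ 2 ≤ 1 := by
      intro n
      rw [hφsq]
      rw [div_le_one (hFcard n)]
      have h1 : (K n ∩ (F n).image (· * g)).card ≤ (F n).card :=
        le_trans (Finset.card_le_card (Finset.inter_subset_right))
          (Finset.card_image_le)
      exact_mod_cast h1
    have hlb : ∀ n, 1 - ((symmDiff (F n) ((F n).image (· * g))).card : ℝ)
        / ((F n).card : ℝ) ≤ φ n g ^ 2 := by
      intro n
      rw [hφsq]
      have hsub : F n ⊆ (K n ∩ (F n).image (· * g))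
          ∪ symmDiff (F n) ((F n).image (· * g)) := by
        intro f hf
        rw [Finset.mem_union]
        by_cases h : f ∈ (F n).image (· * g)
        · exact Or.inl (Finset.mem_inter.2 ⟨hFK n hf, h⟩)
        · exact Or.inr (Finset.mem_symmDiff.2 (Or.inl ⟨hf, h⟩))
      have h1 : (F n).card ≤ (K n ∩ (F n).image (· * g)).card
          + (symmDiff (F n) ((F n).image (· * g))).card :=
        le_trans (Finset.card_le_card hsub) (Finset.card_union_le _ _)
      have h2 : ((F n).card : ℝ) ≤ ((K n ∩ (F n).image (· * g)).card : ℝ)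
          + ((symmDiff (F n) ((F n).image (· * g))).card : ℝ) := by
        exact_mod_cast h1
      rw [sub_le_iff_le_add, ← add_div, le_div_iff₀ (hFcard n), one_mul]
      linarith
    have hsqto : Tendsto (fun n => φ n g ^ 2) atTop (nhds 1) := by
      have hlow : Tendsto (fun n => 1 - ((symmDiff (F n) ((F n).image (· * g))).card : ℝ)
          / ((F n).card : ℝ)) atTop (nhds 1) := by
        have := (tendsto_const_nhds (x := (1 : ℝ)) (f := atTop)).sub (hFolner g)
        simpa using this
      exact tendsto_of_tendsto_of_tendsto_of_le_of_le hlow tendsto_const_nhds hlb hub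
    rw [tendsto_iff_norm_sub_tendsto_zero]
    have heq : (fun n => ‖P n (lp.single 2 g (1 : ℂ)) - lp.single 2 g 1‖)
        = fun n => Real.sqrt (1 - φ n g ^ 2) := by
      funext n
      rw [← hnorm n, Real.sqrt_sq (norm_nonneg _)]
    rw [heq]
    have h0 : Tendsto (fun n => 1 - φ n g ^ 2) atTop (nhds 0) := by
      have := (tendsto_const_nhds (x := (1 : ℝ)) (f := atTop)).sub hsqto
      simpa using this
    have := (Real.continuous_sqrt.tendsto 0).comp h0
    simpa [Function.comp_def] using this
  -- convergence on scaled basis vectors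
  have hδ : ∀ (g : G) (a : ℂ), Tendsto (fun n => P n (lp.single 2 g a)) atTop
      (nhds (lp.single 2 g a)) := by
    intro g a
    have h1 : lp.single (E := fun _ : G => ℂ) 2 g a = a • lp.single 2 g (1 : ℂ) := by
      rw [← lp.single_smul, smul_eq_mul, mul_one]
    rw [h1]
    simp only [map_smul]
    exact (hδ1 g).const_smul a
  -- conclusion
  intro v
  rw [Metric.tendsto_atTop]
  intro ε hε
  have hv : HasSum (fun g => lp.single 2 g (v g)) v :=
    lp.hasSum_single (by norm_num) v
  have h3 : ∀ᶠ (s : Finset G) in atTop, dist (∑ g ∈ s, lp.single 2 g (v g)) v < ε / 3 :=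
    (Metric.tendsto_nhds.1 hv) (ε / 3) (by positivity)
  obtain ⟨s, hs⟩ := h3.exists
  set w := ∑ g ∈ s, lp.single 2 g (v g) with hw
  have hPw : Tendsto (fun n => P n w) atTop (nhds w) := by
    rw [hw]
    simp only [map_sum]
    exact tendsto_finset_sum _ (fun g _ => hδ g (v g))
  obtain ⟨N, hN⟩ := Filter.eventually_atTop.1
    ((Metric.tendsto_nhds.1 hPw) (ε / 3) (by positivity))
  refine ⟨N, fun n hn => ?_⟩
  have h5 : dist (P n v) (P n w) ≤ dist v w := by
    rw [dist_eq_norm, dist_eq_norm, ← map_sub]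
    exact hPle n (v - w)
  have h6 : dist v w < ε / 3 := by rw [dist_comm]; exact hs
  calc dist (P n v) v ≤ dist (P n v) (P n w) + dist (P n w) w + dist w v :=
        dist_triangle4 _ _ _ _
    _ < ε / 3 + ε / 3 + ε / 3 := by
        have h7 : dist w v < ε / 3 := by rw [dist_comm]; exact h6
        exact add_lt_add (add_lt_add (lt_of_le_of_lt h5 h6) (hN n hn)) h7
    _ = ε := by ring
end

section
/- With G, K, L, F, φ as in the context, let A be a unital C*-algebra and α : G → Aut(A) an action of G on A by *-automorphisms. Then for every a ∈ A and every y ∈ K: Σ_{x ∈ yL} φ(x)² ‖α(x⁻¹)a − α(y⁻¹)a‖² ≤ (max_{l ∈ L ∩ KK⁻¹F} ‖α(l)a − a‖)², where KK⁻¹F = {k₁k₂⁻¹f : k₁, k₂ ∈ K, f ∈ F} (a finite set containing 1, so the maximum is over a finite nonempty set) and the sum on the left has only finitely many nonzero terms. -/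
open Pointwise

open Filter ENNReal in
private lemma aux_spectralRadius_eq {A : Type*} [NormedRing A] [StarRing A] [CStarRing A]
    [NormedAlgebra ℂ A] [CompleteSpace A] {c : A} (hc : IsSelfAdjoint c) :
    spectralRadius ℂ c = ‖c‖₊ := by
  have hconst : Tendsto (fun _n : ℕ => (‖c‖₊ : ℝ≥0∞)) atTop (nhds (‖c‖₊ : ℝ≥0∞)) :=
    tendsto_const_nhds
  refine tendsto_nhds_unique ?_ hconst
  convert
    (spectrum.pow_nnnorm_pow_one_div_tendsto_nhds_spectralRadius (c : A)).comp
      (tendsto_pow_atTop_atTop_of_one_lt (α := ℕ) _root_.one_lt_two) using 1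
  refine funext fun n => ?_
  rw [Function.comp_apply, hc.nnnorm_pow_two_pow, ENNReal.coe_pow, ← rpow_natCast, ← rpow_mul]
  simp

private lemma aux_norm_map {A : Type*} [NormedRing A] [StarRing A] [CStarRing A]
    [NormedAlgebra ℂ A] [CompleteSpace A] (e : A ≃ₐ[ℂ] A)
    (he : ∀ b : A, e (star b) = star (e b)) (b : A) : ‖e b‖ = ‖b‖ := by
  have hc : IsSelfAdjoint (star b * b) := IsSelfAdjoint.star_mul_self b
  have hec : IsSelfAdjoint (e (star b * b)) := by
    rw [IsSelfAdjoint, ← he, hc.star_eq]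
  have hsr : spectralRadius ℂ (e (star b * b)) = spectralRadius ℂ (star b * b) := by
    simp only [spectralRadius, AlgEquiv.spectrum_eq]
  have hnn : ‖e (star b * b)‖₊ = ‖star b * b‖₊ := by
    have := (aux_spectralRadius_eq hec).symm.trans (hsr.trans (aux_spectralRadius_eq hc))
    exact_mod_cast this
  have hn : ‖e (star b * b)‖ = ‖star b * b‖ := congrArg NNReal.toReal hnn
  have h1 : ‖e b‖ ^ 2 = ‖b‖ ^ 2 := by
    rw [sq, sq, ← CStarRing.norm_star_mul_self, ← CStarRing.norm_star_mul_self (x := b),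
      ← he, ← map_mul]
    exact hn
  exact (sq_eq_sq₀ (norm_nonneg _) (norm_nonneg _)).mp h1

/-- With a tiling `G = KL`, `F ⊆ K` finite with `1 ∈ F`, `φ(x) = √(|K ∩ Fx|/|F|)`, and an
action `α` of `G` on a unital C*-algebra `A` by *-automorphisms, for every `a ∈ A` and
`y ∈ K`:
`Σ_{x ∈ yL} φ(x)²‖α(x⁻¹)a − α(y⁻¹)a‖² ≤ (max_{l ∈ L ∩ KK⁻¹F} ‖α(l)a − a‖)²`. -/
theorem sum_phi_sq_action_diff_le {G : Type*} [Group G] [Countable G] [DecidableEq G]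
    (K : Finset G) (L : Subgroup G) (hL : L.Normal) (hLfi : L.FiniteIndex)
    (hTile : ∀ g : G, ∃! p : K × L, (p.1 : G) * (p.2 : G) = g)
    (F : Finset G) (hFK : F ⊆ K) (hFone : (1 : G) ∈ F)
    (φ : G → ℝ)
    (hφ : ∀ x : G, φ x = Real.sqrt (((K ∩ F.image (· * x)).card : ℝ) / (F.card : ℝ)))
    {A : Type*} [NormedRing A] [StarRing A] [CStarRing A] [NormedAlgebra ℂ A]
    [CompleteSpace A] [NormOneClass A]
    (α : G →* (A ≃ₐ[ℂ] A)) (hstar : ∀ (s : G) (b : A), α s (star b) = star (α s b))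
    (a : A) (y : G) (hy : y ∈ K) :
    ∑ᶠ x ∈ y • (L : Set G), φ x ^ 2 * ‖α x⁻¹ a - α y⁻¹ a‖ ^ 2 ≤
      (sSup ((fun l => ‖α l a - a‖) ''
        ((L : Set G) ∩ ((K : Set G) * (K : Set G)⁻¹ * (F : Set G))))) ^ 2 := by
  classical
  set Im : Set ℝ := (fun l => ‖α l a - a‖) ''
      ((L : Set G) ∩ ((K : Set G) * (K : Set G)⁻¹ * (F : Set G))) with hIm
  set M : ℝ := sSup Im with hM
  -- norm preservation
  have hn : ∀ (s : G) (b : A), ‖α s b‖ = ‖b‖ := fun s b => aux_norm_map (α s) (hstar s) b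
  -- Im is finite and contains 0
  have hProdFin : ((K : Set G) * (K : Set G)⁻¹ * (F : Set G)).Finite :=
    ((K.finite_toSet.mul K.finite_toSet.inv).mul F.finite_toSet)
  have hImFin : Im.Finite := (hProdFin.inter_of_right _).image _
  have h0Im : (0 : ℝ) ∈ Im := by
    refine ⟨1, ⟨L.one_mem, ?_⟩, by simp⟩
    have : (1 : G) = 1 * (1 : G)⁻¹ * 1 := by group
    rw [this]
    exact Set.mul_mem_mul (Set.mul_mem_mul (hFK hFone) (by simpa using hFK hFone)) hFone
  have hM0 : (0 : ℝ) ≤ M := le_csSup hImFin.bddAbove h0Im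
  have hMB : ∀ r ∈ Im, r ≤ M := fun r hr => le_csSup hImFin.bddAbove hr
  -- uniqueness of the tiling
  have huniq : ∀ k₁ k₂ : G, k₁ ∈ K → k₂ ∈ K → k₁⁻¹ * k₂ ∈ L → k₁ = k₂ := by
    intro k₁ k₂ hk₁ hk₂ hmem
    obtain ⟨p, _, hup⟩ := hTile k₂
    have e1 := hup (⟨k₂, hk₂⟩, ⟨1, L.one_mem⟩) (by simp)
    have e2 := hup (⟨k₁, hk₁⟩, ⟨k₁⁻¹ * k₂, hmem⟩) (by simp [mul_assoc])
    have := congrArg (fun q : K × L => (q.1 : G)) (e2.trans e1.symm)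
    exact this
  -- the finite index set
  set B : Finset G := F.image (·⁻¹) * K with hB
  set T : Finset G := B.filter (fun x => y⁻¹ * x ∈ L) with hT
  have hmemS : ∀ x : G, x ∈ y • (L : Set G) ↔ y⁻¹ * x ∈ L := by
    intro x
    rw [Set.mem_smul_set_iff_inv_smul_mem, smul_eq_mul]
    exact Iff.rfl
  have hBmem : ∀ x : G, x ∈ B ↔ ∃ f ∈ F, ∃ k ∈ K, f⁻¹ * k = x := by
    intro x
    constructor
    · intro hx
      rw [hB, Finset.mem_mul] at hx
      obtain ⟨u, hu, k, hk, hx⟩ := hx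
      rw [Finset.mem_image] at hu
      obtain ⟨f, hf, rfl⟩ := hu
      exact ⟨f, hf, k, hk, hx⟩
    · rintro ⟨f, hf, k, hk, rfl⟩
      rw [hB, Finset.mem_mul]
      exact ⟨f⁻¹, Finset.mem_image_of_mem _ hf, k, hk, rfl⟩
  -- nonzero terms lie in B
  have hsupp : (y • (L : Set G)) ∩
      Function.support (fun x => φ x ^ 2 * ‖α x⁻¹ a - α y⁻¹ a‖ ^ 2) =
      ↑T ∩ Function.support (fun x => φ x ^ 2 * ‖α x⁻¹ a - α y⁻¹ a‖ ^ 2) := by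
    ext x
    simp only [Set.mem_inter_iff, Function.mem_support, hT, Finset.coe_filter,
      Set.mem_setOf_eq]
    constructor
    · rintro ⟨hxS, hne⟩
      refine ⟨⟨?_, (hmemS x).mp hxS⟩, hne⟩
      have hφne : φ x ≠ 0 := by
        intro h
        apply hne
        simp [h]
      have hcard : (K ∩ F.image (· * x)).Nonempty := by
        rw [Finset.nonempty_iff_ne_empty]
        intro h
        apply hφne
        rw [hφ, h]
        simp
      obtain ⟨k, hk⟩ := hcard
      rw [Finset.mem_inter, Finset.mem_image] at hk
      obtain ⟨hkK, f, hf, hfx⟩ := hk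
      refine (hBmem x).mpr ⟨f, hf, k, hkK, ?_⟩
      rw [← hfx]
      group
    · rintro ⟨⟨_, hxL⟩, hne⟩
      exact ⟨(hmemS x).mpr hxL, hne⟩
  rw [finsum_mem_eq_sum_of_inter_support_eq _ hsupp]
  -- pointwise bound on T
  have hbd : ∀ x ∈ T, ‖α x⁻¹ a - α y⁻¹ a‖ ≤ M := by
    intro x hx
    rw [hT, Finset.mem_filter] at hx
    obtain ⟨hxB, hxL⟩ := hx
    obtain ⟨f, hf, k, hk, hxeq⟩ := (hBmem x).mp hxB
    have h1 : y * x⁻¹ ∈ L := by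
      have := hL.conj_mem _ (L.inv_mem hxL) y
      convert this using 1
      group
    have h2 : y * x⁻¹ ∈ (K : Set G) * (K : Set G)⁻¹ * (F : Set G) := by
      have : y * x⁻¹ = y * k⁻¹ * f := by rw [← hxeq]; group
      rw [this]
      exact Set.mul_mem_mul (Set.mul_mem_mul hy (by simpa using hk)) hf
    have hmemIm : ‖α (y * x⁻¹) a - a‖ ∈ Im := ⟨y * x⁻¹, ⟨h1, h2⟩, rfl⟩
    have heq : ‖α x⁻¹ a - α y⁻¹ a‖ = ‖α (y * x⁻¹) a - a‖ := by
      rw [← hn y (α x⁻¹ a - α y⁻¹ a)]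
      congr 1
      rw [map_sub]
      congr 1
      · rw [map_mul]; rfl
      · have : (α y) ((α y⁻¹) a) = (α (y * y⁻¹)) a := by rw [map_mul]; rfl
        rw [this]; simp
    rw [heq]
    exact hMB _ hmemIm
  -- sum of φ² over T is at most 1
  have hφ2 : ∀ x : G, φ x ^ 2 = ((K ∩ F.image (· * x)).card : ℝ) / (F.card : ℝ) := by
    intro x
    rw [hφ]
    exact Real.sq_sqrt (by positivity)
  have hFpos : (0 : ℝ) < (F.card : ℝ) := by
    exact_mod_cast Finset.card_pos.mpr ⟨1, hFone⟩
  have hNat : ∑ x ∈ T, (K ∩ F.image (· * x)).card ≤ F.card := by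
    set Sx : G → Finset G := fun x => (K ∩ F.image (· * x)).image (fun k => k * x⁻¹) with hSx
    have hcard : ∀ x : G, (Sx x).card = (K ∩ F.image (· * x)).card := fun x =>
      Finset.card_image_of_injective _ (mul_left_injective x⁻¹)
    have hdisj : ∀ x₁ ∈ T, ∀ x₂ ∈ T, x₁ ≠ x₂ → Disjoint (Sx x₁) (Sx x₂) := by
      intro x₁ h₁ x₂ h₂ hne
      rw [Finset.disjoint_left]
      intro g hg₁ hg₂
      rw [hSx, Finset.mem_image] at hg₁ hg₂
      obtain ⟨k₁, hk₁, hk₁e⟩ := hg₁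
      obtain ⟨k₂, hk₂, hk₂e⟩ := hg₂
      rw [Finset.mem_inter] at hk₁ hk₂
      rw [hT, Finset.mem_filter] at h₁ h₂
      have hx12 : x₁⁻¹ * x₂ ∈ L := by
        have := L.mul_mem (L.inv_mem h₁.2) h₂.2
        convert this using 1
        group
      have hkk : k₁⁻¹ * k₂ ∈ L := by
        have hk1g : k₁ = g * x₁ := by rw [← hk₁e]; group
        have hk2g : k₂ = g * x₂ := by rw [← hk₂e]; group
        have : k₁⁻¹ * k₂ = x₁⁻¹ * x₂ := by rw [hk1g, hk2g]; group
        rw [this]; exact hx12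
      have hk12 : k₁ = k₂ := huniq k₁ k₂ hk₁.1 hk₂.1 hkk
      apply hne
      have hk1g : k₁ = g * x₁ := by rw [← hk₁e]; group
      have hk2g : k₂ = g * x₂ := by rw [← hk₂e]; group
      have : g * x₁ = g * x₂ := by rw [← hk1g, ← hk2g, hk12]
      exact mul_left_cancel this
    have hsub : T.biUnion Sx ⊆ F := by
      intro g hg
      rw [Finset.mem_biUnion] at hg
      obtain ⟨x, _, hgx⟩ := hg
      rw [hSx, Finset.mem_image] at hgx
      obtain ⟨k, hk, hke⟩ := hgx
      rw [Finset.mem_inter, Finset.mem_image] at hk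
      obtain ⟨_, f, hf, hfk⟩ := hk
      have : g = f := by rw [← hke, ← hfk]; group
      rw [this]; exact hf
    calc ∑ x ∈ T, (K ∩ F.image (· * x)).card
        = ∑ x ∈ T, (Sx x).card := by simp_rw [hcard]
      _ = (T.biUnion Sx).card := (Finset.card_biUnion hdisj).symm
      _ ≤ F.card := Finset.card_le_card hsub
  have hsum : ∑ x ∈ T, φ x ^ 2 ≤ 1 := by
    have : ∑ x ∈ T, φ x ^ 2
        = (∑ x ∈ T, ((K ∩ F.image (· * x)).card : ℝ)) / (F.card : ℝ) := by
      rw [Finset.sum_div]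
      exact Finset.sum_congr rfl fun x _ => hφ2 x
    rw [this, div_le_one hFpos]
    exact_mod_cast hNat
  -- conclude
  calc ∑ x ∈ T, φ x ^ 2 * ‖α x⁻¹ a - α y⁻¹ a‖ ^ 2
      ≤ ∑ x ∈ T, φ x ^ 2 * M ^ 2 := by
        refine Finset.sum_le_sum fun x hx => ?_
        exact mul_le_mul_of_nonneg_left
          (pow_le_pow_left₀ (norm_nonneg _) (hbd x hx) 2) (sq_nonneg _)
    _ = (∑ x ∈ T, φ x ^ 2) * M ^ 2 := (Finset.sum_mul _ _ _).symm
    _ ≤ 1 * M ^ 2 := mul_le_mul_of_nonneg_right hsum (sq_nonneg M)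
    _ = M ^ 2 := one_mul _
end

section
/- Every finitely generated maximally almost periodic group is residually finite. Consequently, every finitely generated subgroup of a discrete maximally almost periodic group is residually finite. -/
set_option synthInstance.maxHeartbeats 1000000
set_option maxHeartbeats 1000000

lemma int_isJacobsonRing : IsJacobsonRing ℤ := by
  rw [isJacobsonRing_iff_prime_eq]
  intro I hI
  rcases eq_or_ne I ⊥ with rfl | hne
  · refine le_antisymm ?_ Ideal.le_jacobson
    intro x hx
    rw [Ideal.mem_bot]
    by_contra hx0
    obtain ⟨p, hple, hp⟩ := Nat.exists_infinite_primes (x.natAbs + 1)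
    have hmax : (Ideal.span {(p : ℤ)}).IsMaximal :=
      PrincipalIdealRing.isMaximal_of_irreducible
        (by exact_mod_cast (Int.prime_iff_natAbs_prime.mpr (by simpa using hp)).irreducible)
    have hxp : x ∈ Ideal.span {(p : ℤ)} :=
      (Ideal.mem_sInf.mp hx) ⟨bot_le, hmax⟩
    rw [Ideal.mem_span_singleton] at hxp
    have hdvd : p ∣ x.natAbs := by
      have := Int.natAbs_dvd_natAbs.mpr hxp
      simpa using this
    have := Nat.le_of_dvd (Nat.pos_of_ne_zero (fun h => hx0 (Int.natAbs_eq_zero.mp h))) hdvd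
    omega
  · haveI := IsPrime.to_maximal_ideal hne
    exact Ideal.jacobson_eq_self_of_isMaximal

lemma finite_of_field_moduleFiniteInt (K : Type*) [Field K] [Module.Finite ℤ K] : Finite K := by
  rcases CharP.char_is_prime_or_zero K (ringChar K) with hp | h0
  · have : AddMonoid.IsTorsion K := by
      intro x
      rw [isOfFinAddOrder_iff_nsmul_eq_zero]
      refine ⟨ringChar K, hp.pos, ?_⟩
      have : ((ringChar K : ℕ) : K) = 0 := CharP.cast_eq_zero K (ringChar K)
      rw [nsmul_eq_mul, this, zero_mul]
    have hfg : AddGroup.FG K := Module.Finite.iff_addGroup_fg.mp ‹_›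
    exact AddCommGroup.finite_of_fg_torsion K this
  · exfalso
    haveI : CharP K 0 := h0 ▸ ringChar.charP K
    haveI : CharZero K := CharP.charP_to_charZero K
    have hint : Algebra.IsIntegral ℤ K := Algebra.IsIntegral.of_finite ℤ K
    have h2 : IsIntegral ℤ (((algebraMap ℚ K).toIntAlgHom) (1/2 : ℚ)) := hint.isIntegral _
    rw [isIntegral_algHom_iff ((algebraMap ℚ K).toIntAlgHom)
      (algebraMap ℚ K).injective] at h2
    obtain ⟨y, hy⟩ := IsIntegrallyClosed.isIntegral_iff.mp h2
    have : (2 : ℚ) * y = 1 := by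
      rw [show ((y : ℤ) : ℚ) = algebraMap ℤ ℚ y from rfl, hy]; ring
    have h2y : (2 * y : ℤ) = 1 := by exact_mod_cast this
    omega

lemma exists_isMaximal_not_mem {R : Type*} [CommRing R] [IsDomain R] [IsJacobsonRing R]
    {a : R} (ha : a ≠ 0) : ∃ m : Ideal R, m.IsMaximal ∧ a ∉ m := by
  have hjac : (⊥ : Ideal R).jacobson = ⊥ :=
    isJacobsonRing_iff.mp ‹_› ⊥ Ideal.isRadical_bot_of_noZeroDivisors
  by_contra h
  push_neg at h
  apply ha
  have : a ∈ (⊥ : Ideal R).jacobson := by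
    rw [Ideal.jacobson]
    exact Ideal.mem_sInf.mpr fun {J} hJ => h J hJ.2
  rwa [hjac, Ideal.mem_bot] at this
lemma finite_quotient_of_maximal {R : Type*} [CommRing R] (hft : Algebra.FiniteType ℤ R)
    (m : Ideal R) (hm : m.IsMaximal) : Finite (R ⧸ m) := by
  haveI : IsJacobsonRing ℤ := int_isJacobsonRing
  letI : Field (R ⧸ m) := Ideal.Quotient.field m
  haveI : Algebra.FiniteType ℤ (R ⧸ m) :=
    @Algebra.FiniteType.of_surjective _ _ _ _ _ _ _ _ hft (Ideal.Quotient.mkₐ ℤ m) Ideal.Quotient.mk_surjective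
  haveI : Module.Finite ℤ (R ⧸ m) := finite_of_finite_type_of_isJacobsonRing ℤ (R ⧸ m)
  exact finite_of_field_moduleFiniteInt (R ⧸ m)

lemma malcev_aux {G : Type*} [Group G] (hFG : Group.FG G) {n : ℕ}
    (π : G →* Matrix.unitaryGroup (Fin n) ℂ) {g : G} (hπg : π g ≠ 1) :
    ∃ N : Subgroup G, N.Normal ∧ N.FiniteIndex ∧ g ∉ N := by
  classical
  obtain ⟨S, hScl, hSfin⟩ := Group.fg_iff.mp hFG
  -- the set of entries of images of generators
  set T : Set ℂ := ⋃ s ∈ S, Set.range (fun p : Fin n × Fin n => (π s).1 p.1 p.2) with hT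
  have hTfin : T.Finite := hSfin.biUnion (fun s _ => Set.finite_range _)
  set s0 : Set ℂ := T ∪ (starRingEnd ℂ) '' T with hs0
  have hs0fin : s0.Finite := hTfin.union (hTfin.image _)
  set R : Subalgebra ℤ ℂ := Algebra.adjoin ℤ s0 with hR
  haveI hRft : Algebra.FiniteType ℤ R :=
    (Subalgebra.fg_iff_finiteType R).mp ⟨hs0fin.toFinset, by rw [Set.Finite.coe_toFinset]⟩
  -- R is closed under conjugation
  have hstar : ∀ z ∈ R, (starRingEnd ℂ) z ∈ R := by
    intro z hz
    have hmap : R.map (starRingEnd ℂ).toIntAlgHom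
        = Algebra.adjoin ℤ ((starRingEnd ℂ).toIntAlgHom '' s0) :=
      AlgHom.map_adjoin _ _
    have himg : ((starRingEnd ℂ).toIntAlgHom : ℂ → ℂ) '' s0 ⊆ s0 := by
      rintro w ⟨u, hu, rfl⟩
      rcases hu with hu | ⟨v, hv, rfl⟩
      · exact Or.inr ⟨u, hu, rfl⟩
      · exact Or.inl (by simpa using hv)
    have : R.map (starRingEnd ℂ).toIntAlgHom ≤ R := by
      rw [hmap, hR]; exact Algebra.adjoin_mono himg
    exact this ⟨z, hz, rfl⟩
  -- all entries of all matrices π x lie in R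
  have hmem : ∀ x : G, ∀ i j, (π x).1 i j ∈ R := by
    intro x
    have hx : x ∈ Subgroup.closure S := hScl ▸ Subgroup.mem_top x
    induction hx using Subgroup.closure_induction with
    | mem s hs =>
      intro i j
      exact Algebra.subset_adjoin (Or.inl (Set.mem_biUnion hs ⟨(i, j), rfl⟩))
    | one =>
      intro i j
      rw [map_one]
      by_cases h : i = j <;> simp [Matrix.one_apply, h, Subalgebra.one_mem, Subalgebra.zero_mem]
    | mul x y hxc hyc hx hy =>
      intro i j
      rw [map_mul]
      show (((π x) * (π y)).1) i j ∈ R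
      rw [Matrix.UnitaryGroup.mul_val, Matrix.mul_apply]
      exact Subalgebra.sum_mem R fun k _ => Subalgebra.mul_mem R (hx i k) (hy k j)
    | inv x hxc hx =>
      intro i j
      rw [map_inv]
      show ((π x)⁻¹).1 i j ∈ R
      rw [Matrix.UnitaryGroup.inv_val, Matrix.star_apply]
      exact hstar _ (hx j i)
  -- the entrywise map into R, as a monoid hom
  let φ : G → Matrix (Fin n) (Fin n) R :=
    fun x => Matrix.of fun i j => (⟨(π x).1 i j, hmem x i j⟩ : R)
  have hφcoe : ∀ x i j, ((φ x i j : R) : ℂ) = (π x).1 i j := fun _ _ _ => rfl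
  let Φ : G →* Matrix (Fin n) (Fin n) R :=
  { toFun := φ,
    map_one' := by
      ext i j
      rw [hφcoe, map_one]
      by_cases h : i = j <;>
        simp [Matrix.one_apply, h]
    map_mul' := by
      intro x y
      ext i j
      rw [hφcoe, map_mul]
      show ((π x) * (π y)).1 i j = _
      rw [Matrix.UnitaryGroup.mul_val, Matrix.mul_apply, Matrix.mul_apply]
      push_cast [hφcoe]
      rfl }
  have hΦ : ∀ x, Φ x = φ x := fun _ => rfl
  -- a nonzero element of R detectig that π g ≠ 1
  have hmat : (π g).1 ≠ (1 : Matrix (Fin n) (Fin n) ℂ) := fun h => hπg (Subtype.ext h)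
  obtain ⟨i, j, hij⟩ : ∃ i j, (π g).1 i j ≠ (1 : Matrix (Fin n) (Fin n) ℂ) i j := by
    by_contra h
    push_neg at h
    exact hmat (Matrix.ext h)
  have hcoe1 : ∀ i j : Fin n, (((1 : Matrix (Fin n) (Fin n) R) i j : R) : ℂ)
      = (1 : Matrix (Fin n) (Fin n) ℂ) i j := by
    intro i j
    by_cases h : i = j <;> simp [Matrix.one_apply, h]
  set a : R := φ g i j - (1 : Matrix (Fin n) (Fin n) R) i j with ha
  have ha0 : a ≠ 0 := by
    intro h
    apply hij
    have := congrArg (fun r : R => (r : ℂ)) h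
    exact (by simpa [ha, sub_eq_zero, hcoe1 i j] using this : ((φ g i j : R) : ℂ) = _)
  -- a maximal ideal avoiding a
  haveI : IsJacobsonRing ℤ := int_isJacobsonRing
  haveI : IsJacobsonRing R := isJacobsonRing_of_finiteType (A := ℤ)
  obtain ⟨m, hm, ham⟩ := exists_isMaximal_not_mem ha0
  haveI := hm
  haveI : Finite (R ⧸ m) := finite_quotient_of_maximal hRft m hm
  -- the finite representation
  let ψ : G →* (Matrix (Fin n) (Fin n) (R ⧸ m))ˣ :=
    (((Ideal.Quotient.mk m).mapMatrix.toMonoidHom.comp Φ)).toHomUnits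
  refine ⟨ψ.ker, MonoidHom.normal_ker ψ, ?_, ?_⟩
  · haveI : Finite (Matrix (Fin n) (Fin n) (R ⧸ m))ˣ := inferInstance
    haveI : Finite ψ.range := inferInstance
    have : Finite (G ⧸ ψ.ker) :=
      Finite.of_equiv ψ.range (QuotientGroup.quotientKerEquivRange ψ).symm
    exact Subgroup.finiteIndex_of_finite_quotient
  · intro hker
    have hψ1 : ψ g = 1 := hker
    have h1 : ((Ideal.Quotient.mk m).mapMatrix) (φ g) = 1 := by
      have h := congrArg (Units.val) hψ1
      rw [Units.val_one] at h
      rw [show (ψ g).val = ((Ideal.Quotient.mk m).mapMatrix.toMonoidHom.comp Φ) g from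
        MonoidHom.coe_toHomUnits _ g] at h
      rw [MonoidHom.comp_apply, hΦ] at h
      exact h
    have h2' : ((Ideal.Quotient.mk m).mapMatrix (φ g)) i j
        = ((Ideal.Quotient.mk m).mapMatrix (1 : Matrix (Fin n) (Fin n) R)) i j := by
      rw [h1, map_one]
    rw [RingHom.mapMatrix_apply, RingHom.mapMatrix_apply, Matrix.map_apply,
      Matrix.map_apply] at h2'
    apply ham
    rw [ha]
    exact Ideal.Quotient.eq.mp h2'

lemma malcev_main {G : Type*} [Group G]
    (hMAP : ∀ g : G, g ≠ 1 → ∃ n : ℕ, 1 ≤ n ∧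
      ∃ π : G →* Matrix.unitaryGroup (Fin n) ℂ, π g ≠ 1)
    (hFG : Group.FG G) :
    ∀ g : G, g ≠ 1 → ∃ N : Subgroup G, N.Normal ∧ N.FiniteIndex ∧ g ∉ N := by
  intro g hg
  obtain ⟨n, -, π, hπ⟩ := hMAP g hg
  exact malcev_aux hFG π hπ

/-- Every finitely generated maximally almost periodic group is residually finite;
consequently every finitely generated subgroup of a discrete maximally almost periodic
group is residually finite. -/
theorem residuallyFinite_of_fg_map {G : Type*} [Group G]
    (hMAP : ∀ g : G, g ≠ 1 → ∃ n : ℕ, 1 ≤ n ∧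
      ∃ π : G →* Matrix.unitaryGroup (Fin n) ℂ, π g ≠ 1) :
    (Group.FG G →
      ∀ g : G, g ≠ 1 → ∃ N : Subgroup G, N.Normal ∧ N.FiniteIndex ∧ g ∉ N) ∧
    (∀ H : Subgroup G, Group.FG H →
      ∀ h : H, h ≠ 1 → ∃ N : Subgroup H, N.Normal ∧ N.FiniteIndex ∧ h ∉ N) := by
  refine ⟨fun hFG => malcev_main hMAP hFG, fun H hH => malcev_main ?_ hH⟩
  intro x hx
  have hx' : (x : G) ≠ 1 := fun hc => hx (OneMemClass.coe_eq_one.mp hc)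
  obtain ⟨n, hn, π, hπ⟩ := hMAP x hx'
  exact ⟨n, hn, π.comp H.subtype, by simpa using hπ⟩
end
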